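/- Let n ≥ 10 and T ≥ 2. Let a₁ = B_{1,1}/n, a₂ = B_{n,1}/n with B = ((1/n²)·I_n + A)^{-1}, and set C = 12/a₂, c₁ = C(a₂ - a₁)/2, c₂ = C(a₂ - a₁)/8. Define f̄(x,z;ȳ) = -Ψ(1)Φ(x₁) + Σ_{i=2}^{T}[Ψ(-z_i)Φ(-x_i) - Ψ(z_i)Φ(x_i)] + Σ_{i=1}^{T-1} h(x_i, z_{i+1}; ȳ^{(i)}) + Σ_{i=1}^{T-1}[c₁·x_i² + c₂·z_{i+1}²] for x ∈ ℝ^T, z = (z₂,…,z_T) ∈ ℝ^{T-1}, ȳ = (ȳ^{(1)},…,ȳ^{(T-1)}) ∈ ℝ^{n(T-1)}. Then for all (x,z), the supremum of f̄(x,z;ȳ) over ȳ ∈ ℝ^{n(T-1)} is attained and equals f̄_m(x,z) = -Ψ(1)Φ(x₁) + Σ_{i=2}^{T}[Ψ(-z_i)Φ(-x_i) - Ψ(z_i)Φ(x_i)] + 6·Σ_{i=1}^{T-1}(x_i - (1/2)·z_{i+1})². -/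

import Mathlib

open Matrix

/-- `Ψ(x) = 0` for `x ≤ 1/2`, `exp(1 - 1/(2x-1)²)` for `x > 1/2`. -/
noncomputable def Psi (x : ℝ) : ℝ :=
  if x ≤ 1 / 2 then 0 else Real.exp (1 - 1 / (2 * x - 1) ^ 2)

/-- `Φ(x) = √e · ∫_{-∞}^x e^{-t²/2} dt`. -/
noncomputable def Phi (x : ℝ) : ℝ :=
  Real.sqrt (Real.exp 1) * ∫ t in Set.Iic x, Real.exp (-t ^ 2 / 2)

/-- The `n × n` tridiagonal matrix with `A 1 1 = A n n = 1`, diagonal `2` otherwise,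
off-diagonal entries `-1`, and all other entries `0` (0-indexed in Lean). -/
noncomputable def triA (n : ℕ) : Matrix (Fin n) (Fin n) ℝ :=
  Matrix.of fun i j =>
    if i = j then (if (i : ℕ) = 0 ∨ (i : ℕ) = n - 1 then 1 else 2)
    else if (i : ℕ) + 1 = (j : ℕ) ∨ (j : ℕ) + 1 = (i : ℕ) then -1 else 0

/-- `B = (α I + A)⁻¹`. -/
noncomputable def Bmat (n : ℕ) (α : ℝ) : Matrix (Fin n) (Fin n) ℝ :=
  (α • (1 : Matrix (Fin n) (Fin n) ℝ) + triA n)⁻¹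

/-- `h(x, z; y) = -(1/2)·Σ_{i=1}^{n-1} (yᵢ - yᵢ₊₁)² - (1/(2n²))·‖y‖₂²
    + √(C/n)·(x y₁ - (1/2) z yₙ)`. -/
noncomputable def hfun (n : ℕ) (hn : 0 < n) (C x z : ℝ) (y : Fin n → ℝ) : ℝ :=
  -(1 / 2) * (∑ i : Fin n, if h : (i : ℕ) + 1 < n then (y i - y ⟨(i : ℕ) + 1, h⟩) ^ 2 else 0)
    - (1 / (2 * (n : ℝ) ^ 2)) * ∑ i : Fin n, (y i) ^ 2
    + Real.sqrt (C / n) * (x * y ⟨0, hn⟩ - (1 / 2) * z * y ⟨n - 1, by omega⟩)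

/-- The unscaled deterministic hard instance `f̄^{nc-sc}(x, z; ȳ)`.
In Lean's 0-indexing, `x j` is the math variable `x_{j+1}` and `z j` is `z_{j+2}`. -/
noncomputable def fbar (n T : ℕ) (hn : 0 < n) (hT : 2 ≤ T) (C c1 c2 : ℝ)
    (x : Fin T → ℝ) (z : Fin (T - 1) → ℝ) (ybar : Fin (T - 1) → Fin n → ℝ) : ℝ :=
  -Psi 1 * Phi (x ⟨0, by omega⟩)
    + ∑ j : Fin (T - 1),
        (Psi (-z j) * Phi (-x ⟨(j : ℕ) + 1, by have := j.isLt; omega⟩)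
          - Psi (z j) * Phi (x ⟨(j : ℕ) + 1, by have := j.isLt; omega⟩))
    + ∑ j : Fin (T - 1), hfun n hn C (x ⟨(j : ℕ), by have := j.isLt; omega⟩) (z j) (ybar j)
    + ∑ j : Fin (T - 1), (c1 * (x ⟨(j : ℕ), by have := j.isLt; omega⟩) ^ 2 + c2 * (z j) ^ 2)

/-!
The `ȳ`-problem splits into `T - 1` independent blocks. On one block,
`h(x, z; y) = -½ yᵀ M y + bᵀ y` with `M = n⁻² I + A`, where `A` is the Laplacian of the path
graph on `n` vertices, so `M` is positive definite and the maximum `½ bᵀ M⁻¹ b` is attained at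
`y = M⁻¹ b`. The vector `b = √(C/n) (x e₁ - z/2 eₙ)` lives on the two ends of the path, and
`B = M⁻¹` is symmetric and invariant under reversing the path, so the maximum is
`(C/2)(a₁ (x² + z²/4) - a₂ x z)`; adding `c₁ x² + c₂ z²` leaves
`(C a₂ / 2)(x - z/2)² = 6 (x - z/2)²`. The one non-algebraic input is `a₂ > 0` (so that
`C > 0` and `√(C/n)² = C/n`): by the discrete maximum principle, `(α I + L)⁻¹` is entrywise
positive for the Laplacian `L` of a connected graph.
-/

open Finset

section

variable {ι : Type*} [Fintype ι] [DecidableEq ι] {M : Matrix ι ι ℝ}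

lemma Matrix.mulVec_col_nonsing_inv (hM : IsUnit M) (s : ι) : M *ᵥ M⁻¹.col s = Pi.single s 1 := by
  rw [← mulVec_single_one, mulVec_mulVec, mul_nonsing_inv _ ((isUnit_iff_isUnit_det M).1 hM),
    one_mulVec]

lemma Matrix.PosDef.neg_half_dotProduct_mulVec_add_dotProduct_le (hM : M.PosDef) (b y : ι → ℝ) :
    -(1 / 2) * (y ⬝ᵥ M *ᵥ y) + b ⬝ᵥ y ≤ (1 / 2) * (b ⬝ᵥ M⁻¹ *ᵥ b) := by
  set ystar := M⁻¹ *ᵥ b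
  have hMy : M *ᵥ ystar = b := by
    rw [mulVec_mulVec, mul_nonsing_inv _ ((isUnit_iff_isUnit_det M).1 hM.isUnit), one_mulVec]
  have hsymm : Mᵀ = M := by
    rw [← conjTranspose_eq_transpose_of_trivial]; exact hM.isHermitian
  have hcross : ystar ⬝ᵥ M *ᵥ y = b ⬝ᵥ y := by
    rw [dotProduct_mulVec, ← mulVec_transpose, hsymm, hMy]
  have hnonneg := hM.posSemidef.dotProduct_mulVec_nonneg (y - ystar)
  rw [star_trivial, mulVec_sub, dotProduct_sub, sub_dotProduct, sub_dotProduct, hMy, hcross,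
    dotProduct_comm y b, dotProduct_comm ystar b] at hnonneg
  linarith

lemma Matrix.neg_half_dotProduct_mulVec_add_dotProduct_inv_mulVec (hM : IsUnit M) (b : ι → ℝ) :
    -(1 / 2) * ((M⁻¹ *ᵥ b) ⬝ᵥ M *ᵥ (M⁻¹ *ᵥ b)) + b ⬝ᵥ M⁻¹ *ᵥ b
      = (1 / 2) * (b ⬝ᵥ M⁻¹ *ᵥ b) := by
  rw [mulVec_mulVec, mul_nonsing_inv _ ((isUnit_iff_isUnit_det M).1 hM), one_mulVec,
    dotProduct_comm]
  ring

end

namespace SimpleGraph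

variable {V : Type*} [Fintype V] [DecidableEq V] (G : SimpleGraph V) [DecidableRel G.Adj] {α : ℝ}

lemma posDef_smul_one_add_lapMatrix (hα : 0 < α) :
    (α • (1 : Matrix V V ℝ) + G.lapMatrix ℝ).PosDef :=
  (PosDef.one.smul hα).add_posSemidef (G.posSemidef_lapMatrix ℝ)

lemma smul_one_add_lapMatrix_mulVec_apply (v : V → ℝ) (i : V) :
    ((α • (1 : Matrix V V ℝ) + G.lapMatrix ℝ) *ᵥ v) i
      = α * v i + ∑ j ∈ G.neighborFinset i, (v i - v j) := by
  rw [add_mulVec, smul_mulVec, one_mulVec, Pi.add_apply, lapMatrix_mulVec_apply, sum_sub_distrib,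
    sum_const, card_neighborFinset_eq_degree, nsmul_eq_mul, Pi.smul_apply, smul_eq_mul]

lemma inv_smul_one_add_lapMatrix_nonneg (hα : 0 < α) (i s : V) :
    0 ≤ (α • (1 : Matrix V V ℝ) + G.lapMatrix ℝ)⁻¹ i s := by
  set v : V → ℝ := (α • (1 : Matrix V V ℝ) + G.lapMatrix ℝ)⁻¹.col s
  have hv : (α • (1 : Matrix V V ℝ) + G.lapMatrix ℝ) *ᵥ v = Pi.single s 1 :=
    mulVec_col_nonsing_inv (G.posDef_smul_one_add_lapMatrix hα).isUnit s
  -- minimum principle: at a minimum `k` of `v`, the Laplacian term of row `k` is nonpositive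
  obtain ⟨k, -, hk⟩ := exists_min_image univ v ⟨i, mem_univ i⟩
  have hrow := congrFun hv k
  rw [smul_one_add_lapMatrix_mulVec_apply] at hrow
  have hlap : ∑ j ∈ G.neighborFinset k, (v k - v j) ≤ 0 :=
    sum_nonpos fun j _ => sub_nonpos.2 (hk j (mem_univ j))
  have hsingle : 0 ≤ (Pi.single s 1 : V → ℝ) k := by
    rw [Pi.single_apply]; split_ifs <;> norm_num
  have hk0 : 0 ≤ v k := nonneg_of_mul_nonneg_right (by linarith) hα
  exact hk0.trans (hk i (mem_univ i))

lemma inv_smul_one_add_lapMatrix_pos (hα : 0 < α) (hG : G.Preconnected) (i s : V) :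
    0 < (α • (1 : Matrix V V ℝ) + G.lapMatrix ℝ)⁻¹ i s := by
  set v : V → ℝ := (α • (1 : Matrix V V ℝ) + G.lapMatrix ℝ)⁻¹.col s
  have hv : (α • (1 : Matrix V V ℝ) + G.lapMatrix ℝ) *ᵥ v = Pi.single s 1 :=
    mulVec_col_nonsing_inv (G.posDef_smul_one_add_lapMatrix hα).isUnit s
  have hnonneg : ∀ j, 0 ≤ v j := fun j => G.inv_smul_one_add_lapMatrix_nonneg hα j s
  have hspread : ∀ u, v u = 0 → u ≠ s ∧ ∀ w, G.Adj u w → v w = 0 := by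
    intro u hu
    have hrow := congrFun hv u
    rw [smul_one_add_lapMatrix_mulVec_apply, hu, mul_zero, zero_add, sum_sub_distrib,
      sum_const_zero, zero_sub] at hrow
    have hsum : 0 ≤ ∑ j ∈ G.neighborFinset u, v j := sum_nonneg fun j _ => hnonneg j
    refine ⟨fun hus => ?_, fun w hw => ?_⟩
    · subst hus
      rw [Pi.single_eq_same] at hrow
      linarith
    · have hsingle : 0 ≤ (Pi.single s 1 : V → ℝ) u := by
        rw [Pi.single_apply]; split_ifs <;> norm_num
      exact (sum_eq_zero_iff_of_nonneg fun j _ => hnonneg j).1 (by linarith) w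
        ((G.mem_neighborFinset u w).2 hw)
  have hwalk : ∀ u w (_ : G.Walk u w), v u = 0 → v w = 0 := by
    intro u w p
    induction p with
    | nil => exact id
    | cons hadj _ ih => exact fun hu => ih ((hspread _ hu).2 _ hadj)
  refine (hnonneg i).lt_of_ne fun hi => ?_
  exact (hspread s (hwalk i s (hG i s).some hi.symm)).1 rfl

end SimpleGraph

lemma Fin.sum_ite_val_add_one_eq {M : Type*} [AddCommMonoid M] {n : ℕ} (i : Fin n)
    (f : Fin n → M) :
    ∑ j : Fin n, (if (i : ℕ) + 1 = j then f j else 0)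
      = if h : (i : ℕ) + 1 < n then f ⟨i + 1, h⟩ else 0 := by
  split_ifs with h
  · simp_rw [← Fin.ext_iff (a := ⟨i + 1, h⟩)]
    simp
  · exact sum_eq_zero fun j _ => if_neg (by omega)

lemma Fin.sum_ite_add_one_eq_val {M : Type*} [AddCommMonoid M] {n : ℕ} (i : Fin n)
    (f : Fin n → M) :
    ∑ j : Fin n, (if (j : ℕ) + 1 = i then f j else 0)
      = if h : 0 < (i : ℕ) then f ⟨i - 1, by omega⟩ else 0 := by
  split_ifs with h
  · simp_rw [show ∀ j : Fin n, (j : ℕ) + 1 = i ↔ j = ⟨i - 1, by omega⟩ from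
      fun j => by simp only [Fin.ext_iff]; omega]
    simp
  · exact sum_eq_zero fun j _ => if_neg (by omega)

namespace SimpleGraph

instance (n : ℕ) : DecidableRel (pathGraph n).Adj :=
  fun _ _ => decidable_of_iff' _ pathGraph_adj

lemma pathGraph_adj_ite {M : Type*} [AddMonoid M] {n : ℕ} (i j : Fin n) (a : M) :
    (if (pathGraph n).Adj i j then a else 0)
      = (if (i : ℕ) + 1 = j then a else 0) + (if (j : ℕ) + 1 = i then a else 0) := by
  simp only [pathGraph_adj]
  split_ifs <;> first | (exfalso; omega) | simp

lemma pathGraph_degree {n : ℕ} (i : Fin n) :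
    ((pathGraph n).degree i : ℝ)
      = (if (i : ℕ) + 1 < n then 1 else 0) + (if 0 < (i : ℕ) then 1 else 0) := by
  simp only [degree_eq_sum_if_adj, pathGraph_adj_ite, sum_add_distrib,
    Fin.sum_ite_val_add_one_eq, Fin.sum_ite_add_one_eq_val, dite_eq_ite]

end SimpleGraph

lemma triA_eq_lapMatrix {n : ℕ} (hn : 2 ≤ n) :
    triA n = (SimpleGraph.pathGraph n).lapMatrix ℝ := by
  ext i j
  rw [SimpleGraph.lapMatrix, Matrix.sub_apply, SimpleGraph.degMatrix, diagonal_apply,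
    SimpleGraph.adjMatrix_apply, SimpleGraph.pathGraph_degree]
  simp only [triA, of_apply, SimpleGraph.pathGraph_adj, Fin.ext_iff]
  split_ifs <;> first | (exfalso; omega) | norm_num

lemma dotProduct_triA_mulVec {n : ℕ} (hn : 2 ≤ n) (y : Fin n → ℝ) :
    y ⬝ᵥ (triA n *ᵥ y)
      = ∑ i : Fin n, if h : (i : ℕ) + 1 < n then (y i - y ⟨i + 1, h⟩) ^ 2 else 0 := by
  rw [triA_eq_lapMatrix hn, ← toLinearMap₂'_apply', SimpleGraph.lapMatrix_toLinearMap₂']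
  simp only [SimpleGraph.pathGraph_adj_ite, sum_add_distrib]
  rw [sum_comm (f := fun (i j : Fin n) => if (j : ℕ) + 1 = i then (y i - y j) ^ 2 else 0)]
  have hswap : ∀ i j : Fin n, (if (i : ℕ) + 1 = j then (y j - y i) ^ 2 else 0)
      = if (i : ℕ) + 1 = j then (y i - y j) ^ 2 else 0 := fun i j => by rw [sub_sq_comm]
  simp only [hswap, Fin.sum_ite_val_add_one_eq]
  ring

lemma triA_transpose (n : ℕ) : (triA n)ᵀ = triA n := by
  ext i j
  simp only [transpose_apply, triA, of_apply, Fin.ext_iff]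
  split_ifs <;> first | rfl | (exfalso; omega)

lemma triA_submatrix_rev (n : ℕ) : (triA n).submatrix Fin.rev Fin.rev = triA n := by
  ext i j
  simp only [submatrix_apply, triA, of_apply, Fin.ext_iff, Fin.val_rev]
  split_ifs <;> first | rfl | (exfalso; omega)

lemma Bmat_transpose (n : ℕ) (α : ℝ) : (Bmat n α)ᵀ = Bmat n α := by
  rw [Bmat, transpose_nonsing_inv, transpose_add, transpose_smul, transpose_one, triA_transpose]

lemma Bmat_rev (n : ℕ) (α : ℝ) (i j : Fin n) : Bmat n α i.rev j.rev = Bmat n α i j := by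
  have hM : (α • (1 : Matrix (Fin n) (Fin n) ℝ) + triA n).submatrix Fin.revPerm Fin.revPerm
      = α • 1 + triA n := by
    ext k l
    have hA := congrFun (congrFun (triA_submatrix_rev n) k) l
    simp only [submatrix_apply] at hA
    simp [one_apply, hA]
  have := congrFun (congrFun (inv_submatrix_equiv (α • 1 + triA n) Fin.revPerm Fin.revPerm) i) j
  rw [hM] at this
  exact this.symm

lemma posDef_smul_one_add_triA {n : ℕ} (hn : 2 ≤ n) {α : ℝ} (hα : 0 < α) :
    (α • (1 : Matrix (Fin n) (Fin n) ℝ) + triA n).PosDef := by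
  rw [triA_eq_lapMatrix hn]
  exact (SimpleGraph.pathGraph n).posDef_smul_one_add_lapMatrix hα

lemma Bmat_pos {n : ℕ} (hn : 2 ≤ n) {α : ℝ} (hα : 0 < α) (i j : Fin n) : 0 < Bmat n α i j := by
  rw [Bmat, triA_eq_lapMatrix hn]
  exact (SimpleGraph.pathGraph n).inv_smul_one_add_lapMatrix_pos hα
    (SimpleGraph.pathGraph_preconnected n) i j

noncomputable def hfunLinearCoeff (n : ℕ) (hn : 0 < n) (C x z : ℝ) : Fin n → ℝ :=
  √(C / n) • (x • Pi.single ⟨0, hn⟩ 1 - (z / 2) • Pi.single ⟨n - 1, by omega⟩ 1)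

lemma hfun_eq_quadratic {n : ℕ} (hn : 2 ≤ n) (C x z : ℝ) (y : Fin n → ℝ) :
    hfun n (by omega) C x z y
      = -(1 / 2) * (y ⬝ᵥ (((n : ℝ) ^ 2)⁻¹ • 1 + triA n) *ᵥ y)
        + hfunLinearCoeff n (by omega) C x z ⬝ᵥ y := by
  rw [hfun, add_mulVec, smul_mulVec, one_mulVec, dotProduct_add, dotProduct_smul,
    dotProduct_triA_mulVec hn]
  simp only [hfunLinearCoeff, smul_dotProduct, sub_dotProduct, single_dotProduct, smul_eq_mul,
    one_mul]
  simp only [dotProduct, ← sq]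
  ring

lemma hfunLinearCoeff_dotProduct_Bmat_mulVec {n : ℕ} (hn : 2 ≤ n) {C : ℝ} (hC : 0 ≤ C)
    (α x z : ℝ) :
    hfunLinearCoeff n (by omega) C x z ⬝ᵥ Bmat n α *ᵥ hfunLinearCoeff n (by omega) C x z
      = C / n * (Bmat n α ⟨0, by omega⟩ ⟨0, by omega⟩ * (x ^ 2 + z ^ 2 / 4)
          - Bmat n α ⟨n - 1, by omega⟩ ⟨0, by omega⟩ * x * z) := by
  have hcorner :
      Bmat n α ⟨n - 1, by omega⟩ ⟨n - 1, by omega⟩ = Bmat n α ⟨0, by omega⟩ ⟨0, by omega⟩ := by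
    simpa [Fin.rev] using Bmat_rev n α ⟨0, by omega⟩ ⟨0, by omega⟩
  have hsymm :
      Bmat n α ⟨0, by omega⟩ ⟨n - 1, by omega⟩ = Bmat n α ⟨n - 1, by omega⟩ ⟨0, by omega⟩ := by
    rw [← transpose_apply (Bmat n α), Bmat_transpose]
  have hsq : √(C / n) * √(C / n) = C / n := Real.mul_self_sqrt (by positivity)
  simp only [hfunLinearCoeff, mulVec_smul, mulVec_sub, mulVec_single_one, smul_dotProduct,
    sub_dotProduct, single_one_dotProduct, Pi.smul_apply, Pi.sub_apply, col_apply, smul_eq_mul]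
  rw [hcorner, hsymm]
  linear_combination (Bmat n α ⟨0, by omega⟩ ⟨0, by omega⟩ * (x ^ 2 + z ^ 2 / 4)
    - Bmat n α ⟨n - 1, by omega⟩ ⟨0, by omega⟩ * x * z) * hsq

lemma exists_max_hfun {n : ℕ} (hn : 2 ≤ n) {C : ℝ} (hC : 0 ≤ C) (x z : ℝ) :
    ∃ ystar : Fin n → ℝ, (∀ y, hfun n (by omega) C x z y ≤ hfun n (by omega) C x z ystar) ∧
      hfun n (by omega) C x z ystar
        = C / (2 * n) * (Bmat n ((n : ℝ) ^ 2)⁻¹ ⟨0, by omega⟩ ⟨0, by omega⟩ * (x ^ 2 + z ^ 2 / 4)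
            - Bmat n ((n : ℝ) ^ 2)⁻¹ ⟨n - 1, by omega⟩ ⟨0, by omega⟩ * x * z) := by
  have hM := posDef_smul_one_add_triA hn (α := ((n : ℝ) ^ 2)⁻¹) (by positivity)
  set b := hfunLinearCoeff n (by omega) C x z
  refine ⟨Bmat n ((n : ℝ) ^ 2)⁻¹ *ᵥ b, fun y => ?_, ?_⟩
  · rw [hfun_eq_quadratic hn, hfun_eq_quadratic hn]
    exact (hM.neg_half_dotProduct_mulVec_add_dotProduct_le b y).trans_eq
      (neg_half_dotProduct_mulVec_add_dotProduct_inv_mulVec hM.isUnit b).symm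
  · rw [hfun_eq_quadratic hn, Bmat,
      neg_half_dotProduct_mulVec_add_dotProduct_inv_mulVec hM.isUnit, ← Bmat,
      hfunLinearCoeff_dotProduct_Bmat_mulVec hn hC]
    field_simp

/-- with `a₁ = B₁₁/n`, `a₂ = Bₙ₁/n`, `C = 12/a₂`, `c₁ = C(a₂-a₁)/2`,
`c₂ = C(a₂-a₁)/8`, the supremum of `f̄(x,z;·)` over `ȳ` is attained and equals
`f̄_m(x,z) = -Ψ(1)Φ(x₁) + Σᵢ[Ψ(-zᵢ)Φ(-xᵢ) - Ψ(zᵢ)Φ(xᵢ)] + 6Σᵢ(xᵢ - zᵢ₊₁/2)²`. -/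
theorem stmt_7 (n T : ℕ) (hn : 10 ≤ n) (hT : 2 ≤ T)
    (a1 a2 C c1 c2 : ℝ)
    (ha1 : a1 = Bmat n (((n : ℝ) ^ 2)⁻¹) ⟨0, by omega⟩ ⟨0, by omega⟩ / n)
    (ha2 : a2 = Bmat n (((n : ℝ) ^ 2)⁻¹) ⟨n - 1, by omega⟩ ⟨0, by omega⟩ / n)
    (hC : C = 12 / a2) (hc1 : c1 = C * (a2 - a1) / 2) (hc2 : c2 = C * (a2 - a1) / 8)
    (x : Fin T → ℝ) (z : Fin (T - 1) → ℝ) :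
    ∃ ystar : Fin (T - 1) → Fin n → ℝ,
      (∀ ybar : Fin (T - 1) → Fin n → ℝ,
        fbar n T (by omega) hT C c1 c2 x z ybar ≤ fbar n T (by omega) hT C c1 c2 x z ystar) ∧
      fbar n T (by omega) hT C c1 c2 x z ystar =
        -Psi 1 * Phi (x ⟨0, by omega⟩)
          + ∑ j : Fin (T - 1),
              (Psi (-z j) * Phi (-x ⟨(j : ℕ) + 1, by have := j.isLt; omega⟩)
                - Psi (z j) * Phi (x ⟨(j : ℕ) + 1, by have := j.isLt; omega⟩))
          + 6 * ∑ j : Fin (T - 1),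
              (x ⟨(j : ℕ), by have := j.isLt; omega⟩ - (1 / 2) * z j) ^ 2 := by
  have ha2pos : 0 < a2 := ha2 ▸ div_pos (Bmat_pos (by omega) (by positivity) _ _) (by positivity)
  have hCpos : 0 < C := hC ▸ div_pos (by norm_num) ha2pos
  choose ystar hmax hval using fun j : Fin (T - 1) =>
    exists_max_hfun (n := n) (by omega) hCpos.le (x ⟨j, by omega⟩) (z j)
  refine ⟨ystar, fun ybar => ?_, ?_⟩
  · unfold fbar
    gcongr with j
    exact hmax j (ybar j)
  · have hblock : ∀ j : Fin (T - 1), hfun n (by omega) C (x ⟨j, by omega⟩) (z j) (ystar j)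
        + (c1 * x ⟨j, by omega⟩ ^ 2 + c2 * z j ^ 2) = 6 * (x ⟨j, by omega⟩ - 1 / 2 * z j) ^ 2 := by
      intro j
      have hn0 : (n : ℝ) ≠ 0 := by positivity
      rw [hval j, eq_div_iff hn0 |>.1 ha1 |>.symm, eq_div_iff hn0 |>.1 ha2 |>.symm, hc1, hc2, hC]
      field_simp
      ring
    simp only [fbar, add_assoc, ← sum_add_distrib, hblock, mul_sum]
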